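/- arXiv:math/0407386 — 3 statements merged into one kernel-verified Lean document; each statement's English description precedes it below -/
import Mathlib

section
/- Let $V$ be a Banach space and let $v, w \in V$ be unit vectors. For every $r \in [0,1]$ there exists a continuous linear functional $\sigma$ on $V$ with $\|\sigma\| \le 1$, $\mathrm{Re}\,\sigma(v) \ge r$, and $|\sigma(w)| \ge (1-r)/3$. -/
/-!
Take norming functionals `f` for `v` and `g` for `w` (Hahn–Banach), with `g` rotated by a unimodular
scalar so that `re (g v) ≥ 0`. If `|f w| ≥ (1 - r)/3` then `f` itself works. Otherwise the convex
combination `r f + (1 - r) g` does: `re` of its value at `v` is at least `r`, and at `w` it has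
modulus at least `(1 - r) - r |f w| ≥ (1 - r)/3`.
-/

theorem RCLike.exists_norm_eq_one_mul_eq_norm {𝕜 : Type*} [RCLike 𝕜] (c : 𝕜) :
    ∃ u : 𝕜, ‖u‖ = 1 ∧ u * c = ‖c‖ := by
  rcases eq_or_ne c 0 with rfl | hc
  · exact ⟨1, norm_one, by simp⟩
  have hc' : (‖c‖ : 𝕜) ≠ 0 := RCLike.ofReal_ne_zero.mpr (norm_ne_zero_iff.mpr hc)
  refine ⟨star c / ‖c‖, ?_, ?_⟩
  · rw [norm_div, norm_star, RCLike.norm_ofReal, abs_norm, div_self (norm_ne_zero_iff.mpr hc)]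
  · rw [div_mul_eq_mul_div, RCLike.star_def, RCLike.conj_mul, pow_two, mul_div_assoc,
      div_self hc', mul_one]

section

variable {𝕜 V : Type*} [RCLike 𝕜] [NormedAddCommGroup V] [NormedSpace 𝕜 V]

open RCLike

theorem exists_dual_vector_re_apply_nonneg (v w : V) :
    ∃ g : StrongDual 𝕜 V, ‖g‖ ≤ 1 ∧ ‖g w‖ = ‖w‖ ∧ 0 ≤ re (g v) := by
  obtain ⟨g, hg, hgw⟩ := exists_dual_vector'' 𝕜 w
  obtain ⟨u, hu, hugv⟩ := exists_norm_eq_one_mul_eq_norm (g v)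
  refine ⟨u • g, ?_, ?_, ?_⟩
  · simpa [norm_smul, hu] using hg
  · simp [hu, hgw]
  · simp [hugv]

theorem norm_convex_combination_le_one {f g : StrongDual 𝕜 V} (hf : ‖f‖ ≤ 1) (hg : ‖g‖ ≤ 1)
    {r : ℝ} (hr₀ : 0 ≤ r) (hr₁ : r ≤ 1) : ‖r • f + (1 - r) • g‖ ≤ 1 := by
  simpa using convex_closedBall (0 : StrongDual 𝕜 V) 1 (mem_closedBall_zero_iff.mpr hf)
    (mem_closedBall_zero_iff.mpr hg) hr₀ (sub_nonneg.mpr hr₁) (by ring)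

theorem exists_dual_re_apply_ge_and_norm_apply_ge {v w : V} (hv : ‖v‖ = 1) (hw : ‖w‖ = 1)
    {r : ℝ} (hr₀ : 0 ≤ r) (hr₁ : r ≤ 1) :
    ∃ σ : StrongDual 𝕜 V, ‖σ‖ ≤ 1 ∧ r ≤ re (σ v) ∧ (1 - r) / 3 ≤ ‖σ w‖ := by
  obtain ⟨f, hf, hfv⟩ := exists_dual_vector'' 𝕜 v
  rw [hv, ofReal_one] at hfv
  by_cases hfw : (1 - r) / 3 ≤ ‖f w‖
  · exact ⟨f, hf, by simpa [hfv] using hr₁, hfw⟩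
  obtain ⟨g, hg, hgw, hgv⟩ := exists_dual_vector_re_apply_nonneg (𝕜 := 𝕜) v w
  refine ⟨r • f + (1 - r) • g, norm_convex_combination_le_one hf hg hr₀ hr₁, ?_, ?_⟩
  · have hre : re ((r • f + (1 - r) • g) v) = r + (1 - r) * re (g v) := by
      simp [hfv, smul_re]
    nlinarith [mul_nonneg (sub_nonneg.mpr hr₁) hgv]
  · have hsplit : (r • f + (1 - r) • g) w = (1 - r) • g w + r • f w :=
      add_comm _ _
    have hlow : (1 - r) - r * ‖f w‖ ≤ ‖(r • f + (1 - r) • g) w‖ := by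
      have := norm_sub_norm_le ((1 - r) • g w) (-(r • f w))
      rw [sub_neg_eq_add, ← hsplit, norm_neg, norm_smul, norm_smul, hgw, hw,
        Real.norm_of_nonneg hr₀, Real.norm_of_nonneg (sub_nonneg.mpr hr₁)] at this
      linarith
    nlinarith [norm_nonneg (f w)]

end

theorem stmt_0_general (V : Type*) [NormedAddCommGroup V] [NormedSpace ℂ V]
    (v w : V) (hv : ‖v‖ = 1) (hw : ‖w‖ = 1) (r : ℝ) (hr : r ∈ Set.Icc (0 : ℝ) 1) :
    ∃ σ : V →L[ℂ] ℂ, ‖σ‖ ≤ 1 ∧ r ≤ (σ v).re ∧ (1 - r) / 3 ≤ ‖σ w‖ :=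
  exists_dual_re_apply_ge_and_norm_apply_ge hv hw hr.1 hr.2

/-- Let $V$ be a complex Banach space and $v, w \in V$ unit vectors. For every
$r \in [0,1]$ there exists a continuous linear functional $\sigma$ on $V$ with
$\|\sigma\| \le 1$, $\mathrm{Re}\,\sigma(v) \ge r$, and $|\sigma(w)| \ge (1-r)/3$. -/
theorem stmt_0 (V : Type*) [NormedAddCommGroup V] [NormedSpace ℂ V] [CompleteSpace V]
    (v w : V) (hv : ‖v‖ = 1) (hw : ‖w‖ = 1) (r : ℝ) (hr : r ∈ Set.Icc (0 : ℝ) 1) :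
    ∃ σ : V →L[ℂ] ℂ, ‖σ‖ ≤ 1 ∧ r ≤ (σ v).re ∧ (1 - r) / 3 ≤ ‖σ w‖ :=
  stmt_0_general V v w hv hw r hr
end

section
/- Let $K, J$ be compact topological spaces with homeomorphisms $T : K \to K$ and $S : J \to J$, and let $\pi : K \to J$ be a continuous surjection with $\pi \circ T = S \circ \pi$. Then the topological entropy satisfies $h_{top}(T) \le h_{top}(S) + \sup_{s \in J} h_{top}(T, \pi^{-1}(s))$, where $h_{top}(T, Q)$ denotes the entropy of $T$ relative to the compact subset $Q$, defined via $(n, U)$-spanning sets for $Q$ with respect to the canonical uniformity of $K$. -/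
/-! Fix an entourage `U` of `K`, `b > h(S)` and `c > sup_y h(T, π⁻¹{y})`. Each fibre `π⁻¹{y}` is
covered by at most `e^{c m_y}` open sets that are `(m_y, U)`-small (all their pairs of points stay
`U`-close for `m_y` steps); since `π` is a closed map, these sets also cover `π⁻¹` of a
neighbourhood of `y`. Compactness of `J` gives a Lebesgue entourage `D` for these neighbourhoods
and a bound `M ≥ m_y` over the finitely many fibres needed. Concatenating local covers along the
orbit of `z` covers the preimage of the `(n, D)`-Bowen ball of `z` by `e^{c (n + M)}` sets that
are `(n, U)`-small, and `e^{b n}` such Bowen balls cover `J`; hence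
`spn_n(T, U) ≤ e^{b n} e^{c (n + M)}` and `h(T) ≤ b + c`. -/

open Filter
open scoped ENNReal

/-- The smallest cardinality of an $(n,U)$-spanning set for $Q$ with respect to
$T$, defined via the uniformity of $K$. -/
noncomputable def spanningNum {K : Type*} [UniformSpace K] (T : K → K) (Q : Set K)
    (n : ℕ) (U : Set (K × K)) : ℕ :=
  sInf {m : ℕ | ∃ E : Finset K, E.card = m ∧
    ∀ s ∈ Q, ∃ t ∈ E, ∀ k < n, (T^[k] s, T^[k] t) ∈ U}

/-- The topological entropy of $T$ relative to the subset $Q$, defined via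
$(n,U)$-spanning sets over entourages $U$ of the canonical uniformity. -/
noncomputable def topEnt {K : Type*} [UniformSpace K] (T : K → K) (Q : Set K) : ℝ≥0∞ :=
  ⨆ U ∈ uniformity K, Filter.atTop.limsup
    (fun n : ℕ => ENNReal.ofReal (Real.log (spanningNum T Q n U) / n))

open Function Set Dynamics UniformSpace
open scoped SetRel Uniformity Topology

section Covers

variable {K : Type*}

/-- Unlike `Dynamics.IsDynCoverOf`, the pieces are arbitrary sets rather than dynamical balls, so
that covers can be refined along an orbit. -/
def IsDynSmallCoverOf (T : K → K) (A : Set K) (U : SetRel K K) (n : ℕ) (𝒞 : Finset (Set K)) :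
    Prop :=
  A ⊆ ⋃₀ ↑𝒞 ∧ ∀ P ∈ 𝒞, P ×ˢ P ⊆ dynEntourage T U n

variable {T : K → K} {A B : Set K} {U V : SetRel K K} {m n : ℕ} {𝒜 𝒞 : Finset (Set K)}

theorem dynEntourage_add (T : K → K) (U : SetRel K K) (m n : ℕ) :
    dynEntourage T U (m + n) =
      dynEntourage T U m ∩ Prod.map T^[m] T^[m] ⁻¹' dynEntourage T U n := by
  ext ⟨x, y⟩
  simp only [mem_inter_iff, mem_preimage, Prod.map_apply, mem_dynEntourage,
    ← iterate_add_apply]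
  refine ⟨fun h => ⟨fun k hk => h k (by omega), fun k hk => h (k + m) (by omega)⟩, ?_⟩
  rintro ⟨h₁, h₂⟩ k hk
  rcases lt_or_ge k m with hkm | hkm
  · exact h₁ k hkm
  · obtain ⟨j, rfl⟩ := Nat.exists_eq_add_of_le' hkm
    exact h₂ j (by omega)

theorem IsDynSmallCoverOf.of_subset (h : IsDynSmallCoverOf T A U n 𝒞) (hBA : B ⊆ A) :
    IsDynSmallCoverOf T B U n 𝒞 :=
  ⟨hBA.trans h.1, h.2⟩

theorem IsDynSmallCoverOf.of_le (h : IsDynSmallCoverOf T A U n 𝒞) (hmn : m ≤ n) :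
    IsDynSmallCoverOf T A U m 𝒞 :=
  ⟨h.1, fun P hP => (h.2 P hP).trans (dynEntourage_antitone T U hmn)⟩

theorem IsDynSmallCoverOf.image₂_inter_preimage [DecidableEq (Set K)] {A' : Set K}
    (h : IsDynSmallCoverOf T A U m 𝒜) (h' : IsDynSmallCoverOf T A' U n 𝒞)
    (hA : MapsTo T^[m] A A') :
    IsDynSmallCoverOf T A U (m + n) (Finset.image₂ (fun P P' => P ∩ T^[m] ⁻¹' P') 𝒜 𝒞) := by
  constructor
  · intro x hx
    obtain ⟨P, hP, hxP⟩ := mem_sUnion.1 (h.1 hx)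
    obtain ⟨P', hP', hxP'⟩ := mem_sUnion.1 (h'.1 (hA hx))
    exact mem_sUnion.2 ⟨_, Finset.mem_image₂_of_mem hP hP', hxP, hxP'⟩
  · intro Q hQ
    obtain ⟨P, hP, P', hP', rfl⟩ := Finset.mem_image₂.1 hQ
    rw [dynEntourage_add]
    rintro ⟨x, y⟩ ⟨⟨hxP, hxP'⟩, hyP, hyP'⟩
    exact ⟨h.2 P hP ⟨hxP, hyP⟩, h'.2 P' hP' ⟨hxP', hyP'⟩⟩

theorem IsDynSmallCoverOf.biUnion [DecidableEq (Set K)] {ι : Type*} {F : Finset ι}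
    {s : ι → Set K} {𝒞 : ι → Finset (Set K)} (hA : A ⊆ ⋃ i ∈ F, s i)
    (h : ∀ i ∈ F, IsDynSmallCoverOf T (s i) U n (𝒞 i)) :
    IsDynSmallCoverOf T A U n (F.biUnion 𝒞) := by
  refine ⟨fun x hx => ?_, fun P hP => ?_⟩
  · obtain ⟨i, hi, hxi⟩ := mem_iUnion₂.1 (hA hx)
    obtain ⟨P, hP, hxP⟩ := mem_sUnion.1 ((h i hi).1 hxi)
    exact mem_sUnion.2 ⟨P, Finset.mem_biUnion.2 ⟨i, hi, hP⟩, hxP⟩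
  · obtain ⟨i, hi, hP⟩ := Finset.mem_biUnion.1 hP
    exact (h i hi).2 P hP

theorem prod_subset_dynEntourage_of_comp_subset [V.IsSymm] (hVU : V ○ V ⊆ U) (e : K) :
    {x | (x, e) ∈ dynEntourage T V n} ×ˢ {x | (x, e) ∈ dynEntourage T V n} ⊆
      dynEntourage T U n := by
  rintro ⟨x, y⟩ ⟨hx, hy⟩
  exact dynEntourage_monotone T n hVU
    (dynEntourage_comp_subset T V V n ⟨e, hx, (dynEntourage T V n).symm hy⟩)

end Covers

section Spanning

variable {K : Type*} [UniformSpace K] {T : K → K} {Q : Set K} {U : SetRel K K} {n : ℕ}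

theorem spanningNum_le_card {E : Finset K}
    (hE : ∀ s ∈ Q, ∃ t ∈ E, (s, t) ∈ dynEntourage T U n) : spanningNum T Q n U ≤ E.card :=
  Nat.sInf_le ⟨E, rfl, fun s hs => (hE s hs).imp fun _ ht => ⟨ht.1, mem_dynEntourage.1 ht.2⟩⟩

theorem IsDynSmallCoverOf.spanningNum_le {𝒞 : Finset (Set K)}
    (h : IsDynSmallCoverOf T Q U n 𝒞) : spanningNum T Q n U ≤ 𝒞.card := by
  classical
  rcases isEmpty_or_nonempty K with hK | hK
  · exact (spanningNum_le_card (E := ∅) fun s _ => isEmptyElim s).trans (Nat.zero_le _)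
  refine (spanningNum_le_card fun s hs => ?_).trans
    (Finset.card_image_le (s := 𝒞) (f := fun P => Classical.epsilon (· ∈ P)))
  obtain ⟨P, hP, hsP⟩ := mem_sUnion.1 (h.1 hs)
  exact ⟨_, Finset.mem_image_of_mem _ hP, h.2 P hP ⟨hsP, Classical.epsilon_spec ⟨s, hsP⟩⟩⟩

theorem exists_card_eq_spanningNum (hT : Continuous T) (hQ : IsCompact Q) (hU : U ∈ 𝓤 K)
    (n : ℕ) : ∃ E : Finset K, E.card = spanningNum T Q n U ∧
      ∀ s ∈ Q, ∃ t ∈ E, (s, t) ∈ dynEntourage T U n := by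
  have hnhds : ∀ t : K, {x | (x, t) ∈ dynEntourage T U n} ∈ 𝓝 t := fun t => by
    convert ball_dynEntourage_mem_nhds hT (symm_le_uniformity hU) n t using 1
    ext x
    simp [ball, mem_dynEntourage]
  obtain ⟨E₀, -, hE₀⟩ := hQ.elim_nhds_subcover _ fun t _ => hnhds t
  obtain ⟨E, hE, hEspan⟩ := Nat.sInf_mem (s := {m : ℕ | ∃ E : Finset K, E.card = m ∧
      ∀ s ∈ Q, ∃ t ∈ E, ∀ k < n, (T^[k] s, T^[k] t) ∈ U})
    ⟨E₀.card, E₀, rfl, fun s hs => (mem_iUnion₂.1 (hE₀ hs)).imp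
      fun _ ht => ⟨ht.1, mem_dynEntourage.1 ht.2⟩⟩
  exact ⟨E, hE, fun s hs => (hEspan s hs).imp fun t ht => ⟨ht.1, mem_dynEntourage.2 ht.2⟩⟩

theorem eventually_spanningNum_le_exp (hU : U ∈ 𝓤 K) {c : ℝ}
    (h : topEnt T Q < ENNReal.ofReal c) :
    ∀ᶠ n : ℕ in atTop, (spanningNum T Q n U : ℝ) ≤ Real.exp (c * n) := by
  have hc : 0 < c := ENNReal.ofReal_pos.1 (zero_le.trans_lt h)
  have hlim := eventually_lt_of_limsup_lt ((le_iSup₂ (f := fun U (_ : U ∈ 𝓤 K) =>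
    atTop.limsup fun n : ℕ => ENNReal.ofReal (Real.log (spanningNum T Q n U) / n)) U hU).trans_lt h)
  filter_upwards [hlim, eventually_gt_atTop 0] with n hn hn₀
  rw [ENNReal.ofReal_lt_ofReal_iff hc, div_lt_iff₀ (by exact_mod_cast hn₀)] at hn
  exact (Real.le_exp_log _).trans (Real.exp_le_exp.2 hn.le)

theorem eventually_exists_isOpen_isDynSmallCoverOf (hT : Continuous T) (hQ : IsCompact Q)
    (hU : U ∈ 𝓤 K) {c : ℝ} (h : topEnt T Q < ENNReal.ofReal c) :
    ∀ᶠ m : ℕ in atTop, ∃ 𝒜 : Finset (Set K), (𝒜.card : ℝ) ≤ Real.exp (c * m) ∧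
      IsDynSmallCoverOf T Q U m 𝒜 ∧ ∀ P ∈ 𝒜, IsOpen P := by
  classical
  obtain ⟨V, hV, hVo, hVs, hVU⟩ := comp_open_symm_mem_uniformity_sets hU
  filter_upwards [eventually_spanningNum_le_exp hV h] with m hm
  obtain ⟨E, hEcard, hE⟩ := exists_card_eq_spanningNum hT hQ hV m
  refine ⟨E.image fun e => {x | (x, e) ∈ dynEntourage T V m}, ?_, ⟨fun s hs => ?_, ?_⟩, ?_⟩
  · exact (Nat.cast_le.2 Finset.card_image_le).trans (hEcard ▸ hm)
  · obtain ⟨t, ht, hst⟩ := hE s hs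
    exact mem_sUnion.2 ⟨_, Finset.mem_image_of_mem _ ht, hst⟩
  · simp only [Finset.forall_mem_image]
    exact fun e _ => prod_subset_dynEntourage_of_comp_subset hVU e
  · simp only [Finset.forall_mem_image]
    exact fun e _ => (isOpen.dynEntourage hT hVo m).preimage (continuous_id.prodMk continuous_const)

theorem limsup_ofReal_log_div_le {N : ℕ → ℕ} {C a : ℝ}
    (h : ∀ᶠ n : ℕ in atTop, (N n : ℝ) ≤ Real.exp (C + a * n)) :
    atTop.limsup (fun n : ℕ => ENNReal.ofReal (Real.log (N n) / n)) ≤ ENNReal.ofReal a := by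
  have hlim : Tendsto (fun n : ℕ => ENNReal.ofReal (C / n + a)) atTop (𝓝 (ENNReal.ofReal a)) := by
    simpa using ENNReal.tendsto_ofReal ((tendsto_const_div_atTop_nhds_zero_nat C).add_const a)
  rw [← hlim.limsup_eq]
  refine limsup_le_limsup ?_
  filter_upwards [h, eventually_gt_atTop 0] with n hn hn₀
  have hn₀' : (0 : ℝ) < n := by exact_mod_cast hn₀
  rcases Nat.eq_zero_or_pos (N n) with hN | hN
  · simp [hN]
  refine ENNReal.ofReal_le_ofReal ?_
  rw [div_add' _ _ _ hn₀'.ne', div_le_div_iff_of_pos_right hn₀',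
    Real.log_le_iff_le_exp (by exact_mod_cast hN)]
  exact hn

end Spanning

theorem ENNReal.le_add_of_forall_lt_ofReal {x y z : ℝ≥0∞}
    (h : ∀ b c : ℝ, 0 ≤ c → x < ENNReal.ofReal b → y < ENNReal.ofReal c →
      z ≤ ENNReal.ofReal (b + c)) :
    z ≤ x + y := by
  rcases eq_or_ne x ⊤ with rfl | hx
  · simp
  rcases eq_or_ne y ⊤ with rfl | hy
  · simp
  refine ENNReal.le_of_forall_pos_le_add fun ε hε _ => ?_
  have hε' : (0 : ℝ) < ε := hε
  have hlt : ∀ w : ℝ≥0∞, w ≠ ⊤ → w < ENNReal.ofReal (w.toReal + ε / 2) := fun w hw =>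
    (ENNReal.lt_ofReal_iff_toReal_lt hw).2 (by linarith)
  calc z ≤ ENNReal.ofReal ((x.toReal + ε / 2) + (y.toReal + ε / 2)) :=
        h _ _ (by positivity) (hlt x hx) (hlt y hy)
    _ = x + y + ε := by
        rw [show (x.toReal + ε / 2) + (y.toReal + ε / 2) = x.toReal + y.toReal + ε by ring,
          ENNReal.ofReal_add (by positivity) hε'.le, ENNReal.ofReal_add (by positivity)
          (by positivity), ENNReal.ofReal_toReal hx, ENNReal.ofReal_toReal hy,
          ENNReal.ofReal_coe_nnreal]

section Factor

variable {K J : Type*} {T : K → K} {S : J → J} {π : K → J} {U : SetRel K K}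

theorem exists_isDynSmallCoverOf_preimage_dynEntourage [DecidableEq (Set K)] (hπ : Semiconj π T S)
    {D : SetRel J J} {c : ℝ} (hc : 0 ≤ c) {M : ℕ}
    (hloc : ∀ z, ∃ m, 0 < m ∧ m ≤ M ∧ ∃ 𝒜 : Finset (Set K), (𝒜.card : ℝ) ≤ Real.exp (c * m) ∧
      IsDynSmallCoverOf T (π ⁻¹' {w | (w, z) ∈ D}) U m 𝒜)
    (n : ℕ) (z : J) :
    ∃ 𝒞 : Finset (Set K), (𝒞.card : ℝ) ≤ Real.exp (c * (n + M)) ∧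
      IsDynSmallCoverOf T (π ⁻¹' {w | (w, z) ∈ dynEntourage S D n}) U n 𝒞 := by
  induction n using Nat.strong_induction_on generalizing z with
  | _ n ih =>
  rcases Nat.eq_zero_or_pos n with rfl | hn
  · refine ⟨{univ}, ?_, fun x _ => mem_sUnion.2 ⟨univ, by simp, trivial⟩, by simp⟩
    simpa using Real.one_le_exp (by positivity)
  obtain ⟨m, hm, hmM, 𝒜, h𝒜card, h𝒜⟩ := hloc z
  have h𝒜n : IsDynSmallCoverOf T (π ⁻¹' {w | (w, z) ∈ dynEntourage S D n}) U m 𝒜 :=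
    h𝒜.of_subset fun x hx => by simpa using mem_dynEntourage.1 hx 0 hn
  by_cases hmn : m ≤ n
  · obtain ⟨n', rfl⟩ := Nat.exists_eq_add_of_le hmn
    obtain ⟨𝒞, h𝒞card, h𝒞⟩ := ih n' (by omega) (S^[m] z)
    have hmaps : MapsTo T^[m] (π ⁻¹' {w | (w, z) ∈ dynEntourage S D (m + n')})
        (π ⁻¹' {w | (w, S^[m] z) ∈ dynEntourage S D n'}) := fun x hx => by
      change (π x, z) ∈ dynEntourage S D (m + n') at hx
      rw [dynEntourage_add] at hx
      change (π (T^[m] x), S^[m] z) ∈ dynEntourage S D n'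
      rw [(hπ.iterate_right m).eq x]
      exact hx.2
    refine ⟨_, ?_, h𝒜n.image₂_inter_preimage h𝒞 hmaps⟩
    calc ((Finset.image₂ (fun P P' => P ∩ T^[m] ⁻¹' P') 𝒜 𝒞).card : ℝ)
        ≤ 𝒜.card * 𝒞.card := by exact_mod_cast Finset.card_image₂_le _ _ _
      _ ≤ Real.exp (c * m) * Real.exp (c * (n' + M)) := by gcongr
      _ = Real.exp (c * ((m + n' : ℕ) + M)) := by rw [← Real.exp_add]; push_cast; congr 1; ring
  · refine ⟨𝒜, h𝒜card.trans (Real.exp_le_exp.2 ?_), h𝒜n.of_le (by omega)⟩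
    gcongr
    exact (Nat.cast_le.2 hmM).trans (le_add_of_nonneg_left n.cast_nonneg)

variable [UniformSpace K] [UniformSpace J]

theorem exists_entourage_forall_isDynSmallCoverOf_preimage [CompactSpace K] [CompactSpace J]
    [T2Space J] (hT : Continuous T) (hπ : Continuous π) (hU : U ∈ 𝓤 K) {c : ℝ}
    (hc : ∀ y, topEnt T (π ⁻¹' {y}) < ENNReal.ofReal c) :
    ∃ D ∈ 𝓤 J, ∃ M : ℕ, ∀ z, ∃ m, 0 < m ∧ m ≤ M ∧ ∃ 𝒜 : Finset (Set K),
      (𝒜.card : ℝ) ≤ Real.exp (c * m) ∧ IsDynSmallCoverOf T (π ⁻¹' {w | (w, z) ∈ D}) U m 𝒜 := by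
  have hfib : ∀ y, ∃ m : ℕ, 0 < m ∧ ∃ 𝒜 : Finset (Set K), (𝒜.card : ℝ) ≤ Real.exp (c * m) ∧
      IsDynSmallCoverOf T (π ⁻¹' {y}) U m 𝒜 ∧ ∀ P ∈ 𝒜, IsOpen P := fun y =>
    ((eventually_gt_atTop 0).and (eventually_exists_isOpen_isDynSmallCoverOf hT
      (isClosed_singleton.preimage hπ).isCompact hU (hc y))).exists
  choose m hm 𝒜 h𝒜card h𝒜 h𝒜open using hfib
  set W : J → Set J := fun y => kernImage π (⋃₀ ↑(𝒜 y))
  have hWo : ∀ y, IsOpen (W y) := fun y =>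
    isClosedMap_iff_kernImage.1 hπ.isClosedMap (isOpen_sUnion fun P hP => h𝒜open y P hP)
  have hWy : ∀ y, y ∈ W y := fun y =>
    subset_kernImage_iff.2 (h𝒜 y).1 (mem_singleton y)
  obtain ⟨t, ht⟩ := isCompact_univ.elim_finite_subcover W hWo fun y _ => mem_iUnion.2 ⟨y, hWy y⟩
  obtain ⟨D, hD, hDW⟩ := lebesgue_number_lemma (U := fun i : t => W i) isCompact_univ
    (fun i => hWo i) fun z hz => by
      obtain ⟨y, hy, hzy⟩ := mem_iUnion₂.1 (ht hz)
      exact mem_iUnion.2 ⟨⟨y, hy⟩, hzy⟩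
  refine ⟨Prod.swap ⁻¹' D, symm_le_uniformity hD, t.sup m, fun z => ?_⟩
  obtain ⟨i, hi⟩ := hDW z (mem_univ z)
  exact ⟨m i, hm i, Finset.le_sup i.2, 𝒜 i, h𝒜card i,
    (preimage_mono hi).trans (subset_kernImage_iff.1 (subset_refl (W i))), (h𝒜 i).2⟩

theorem topEnt_univ_le_ofReal_add [CompactSpace K] [CompactSpace J] [T2Space J]
    (hT : Continuous T) (hS : Continuous S) (hπ : Continuous π) (hTS : Semiconj π T S)
    {b c : ℝ} (hc₀ : 0 ≤ c) (hb : topEnt S univ < ENNReal.ofReal b)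
    (hc : ∀ y, topEnt T (π ⁻¹' {y}) < ENNReal.ofReal c) :
    topEnt T univ ≤ ENNReal.ofReal (b + c) := by
  classical
  refine iSup₂_le fun U hU => ?_
  obtain ⟨D, hD, M, hloc⟩ := exists_entourage_forall_isDynSmallCoverOf_preimage hT hπ hU hc
  refine limsup_ofReal_log_div_le (C := c * M) ?_
  filter_upwards [eventually_spanningNum_le_exp hD hb] with n hn
  obtain ⟨F, hFcard, hF⟩ := exists_card_eq_spanningNum hS isCompact_univ hD n
  choose 𝒞 h𝒞card h𝒞 using exists_isDynSmallCoverOf_preimage_dynEntourage hTS hc₀ hloc n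
  have hcover : IsDynSmallCoverOf T univ U n (F.biUnion 𝒞) :=
    IsDynSmallCoverOf.biUnion (fun x _ => by
      obtain ⟨z, hz, hxz⟩ := hF (π x) trivial
      exact mem_iUnion₂_of_mem hz hxz) fun z _ => h𝒞 z
  calc (spanningNum T univ n U : ℝ) ≤ (F.biUnion 𝒞).card := by
        exact_mod_cast hcover.spanningNum_le
    _ ≤ ∑ z ∈ F, ((𝒞 z).card : ℝ) := by exact_mod_cast Finset.card_biUnion_le
    _ ≤ F.card * Real.exp (c * (n + M)) := by
        simpa using Finset.sum_le_card_nsmul F _ _ fun z _ => h𝒞card z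
    _ ≤ Real.exp (b * n) * Real.exp (c * (n + M)) := by gcongr; exact hFcard ▸ hn
    _ = Real.exp (c * M + (b + c) * n) := by rw [← Real.exp_add]; congr 1; ring

end Factor

theorem stmt_14_general {K J : Type*} [UniformSpace K] [CompactSpace K]
    [UniformSpace J] [CompactSpace J] [T2Space J]
    (T : K ≃ₜ K) (S : J ≃ₜ J) (π : K → J) (hπc : Continuous π)
    (hcomm : π ∘ ⇑T = ⇑S ∘ π) :
    topEnt (⇑T) Set.univ ≤ topEnt (⇑S) Set.univ + ⨆ s : J, topEnt (⇑T) (π ⁻¹' {s}) :=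
  ENNReal.le_add_of_forall_lt_ofReal fun _ _ hc₀ hb hc =>
    topEnt_univ_le_ofReal_add T.continuous S.continuous hπc (semiconj_iff_comp_eq.2 hcomm) hc₀ hb
      fun y => (le_iSup (fun s => topEnt T (π ⁻¹' {s})) y).trans_lt hc

/-- Bowen's inequality in the nonmetrizable setting: if $\pi : K \to J$ is a
continuous surjection intertwining homeomorphisms $T$ and $S$ of compact Hausdorff
spaces, then $h_{top}(T) \le h_{top}(S) + \sup_{s\in J} h_{top}(T, \pi^{-1}(s))$. -/
theorem stmt_14 {K J : Type*} [UniformSpace K] [CompactSpace K] [T2Space K]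
    [UniformSpace J] [CompactSpace J] [T2Space J]
    (T : K ≃ₜ K) (S : J ≃ₜ J) (π : K → J) (hπc : Continuous π)
    (hπs : Function.Surjective π) (hcomm : π ∘ ⇑T = ⇑S ∘ π) :
    topEnt (⇑T) Set.univ ≤ topEnt (⇑S) Set.univ + ⨆ s : J, topEnt (⇑T) (π ⁻¹' {s}) :=
  stmt_14_general T S π hπc hcomm
end

section
/- Let $X$ be a Banach space, $T : X \to X$ a surjective linear isometry, and $x \in X$. Suppose that for all $\lambda \ge 1$, $d > 0$, and every sequence $n_k \to \infty$, it is NOT the case that there are sets $I_k \subseteq \{0,\dots,n_k - 1\}$ of cardinality $\ge d n_k$ with $\{T^i x : i \in I_k\}$ being $\lambda$-equivalent to the standard $\ell_1$-basis. Then for every $I \subseteq \mathbb{Z}$ of positive upper density and every $\varepsilon > 0$, there exist a finite subset $E \subseteq I$ and complex scalars $(c_i)_{i \in E}$ with $\sum_{i \in E} |c_i| = 1$ and $\left\| \sum_{i \in E} c_i T^i x \right\| \le \varepsilon$. -/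
open Filter

/-- If the orbit of $x$ under the surjective linear isometry $T$ admits no
positive-density sets of iterates $\lambda$-equivalent to the standard
$\ell_1$-basis (along a sequence $n_k \to \infty$, with $I_k \subseteq
\{0,\dots,n_k-1\}$, $|I_k| \ge d n_k$), then along every subset $I \subseteq
\mathbb{Z}$ of positive upper density one can find, for every $\varepsilon > 0$,
a finite $E \subseteq I$ and scalars $c$ with $\sum_{i\in E}|c_i| = 1$ and
$\|\sum_{i\in E} c_i T^i x\| \le \varepsilon$. -/
theorem stmt_19 (X : Type*) [NormedAddCommGroup X] [NormedSpace ℂ X]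
    (T : X ≃ₗᵢ[ℂ] X) (x : X)
    (h : ¬ ∃ (lam d : ℝ) (N : ℕ → ℕ) (I : ℕ → Finset ℤ),
      1 ≤ lam ∧ 0 < d ∧ Tendsto N atTop atTop ∧
      ∀ k, I k ⊆ Finset.Ico (0 : ℤ) (N k) ∧ d * N k ≤ (I k).card ∧
        ∃ a b : ℝ, 0 < a ∧ b ≤ lam * a ∧
          ∀ c : ℤ → ℂ,
            a * ∑ i ∈ I k, ‖c i‖ ≤ ‖∑ i ∈ I k, c i • (T ^ i) x‖ ∧
            ‖∑ i ∈ I k, c i • (T ^ i) x‖ ≤ b * ∑ i ∈ I k, ‖c i‖)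
    (I : Set ℤ)
    (hI : 0 < Filter.atTop.limsup
      (fun n : ℕ => ((I ∩ Set.Icc (-(n : ℤ)) (n : ℤ)).ncard : ℝ) / (2 * n + 1)))
    (ε : ℝ) (hε : 0 < ε) :
    ∃ (E : Finset ℤ) (c : ℤ → ℂ), ↑E ⊆ I ∧ (∑ i ∈ E, ‖c i‖) = 1 ∧
      ‖∑ i ∈ E, c i • (T ^ i) x‖ ≤ ε := by
  classical
  by_contra hcon
  push_neg at hcon
  -- Key: ℓ¹ lower bound on all finite subsets of I
  have key : ∀ (E : Finset ℤ) (c : ℤ → ℂ), ↑E ⊆ I →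
      ε * ∑ i ∈ E, ‖c i‖ ≤ ‖∑ i ∈ E, c i • (T ^ i) x‖ := by
    intro E c hE
    set s := ∑ i ∈ E, ‖c i‖ with hs
    have hs0 : 0 ≤ s := Finset.sum_nonneg fun i _ => norm_nonneg _
    rcases hs0.eq_or_lt with h0 | hpos
    · have hz : ∀ i ∈ E, c i = 0 := by
        intro i hi
        have := (Finset.sum_eq_zero_iff_of_nonneg (fun i _ => norm_nonneg (c i))).1 h0.symm i hi
        simpa using this
      have : ∑ i ∈ E, c i • (T ^ i) x = 0 :=
        Finset.sum_eq_zero fun i hi => by rw [hz i hi, zero_smul]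
      rw [this, ← h0]
      simp
    · set c' : ℤ → ℂ := fun i => c i / (s : ℂ) with hc'
      have hnorm1 : ∑ i ∈ E, ‖c' i‖ = 1 := by
        simp only [hc', norm_div, Complex.norm_real, Real.norm_of_nonneg hs0]
        rw [← Finset.sum_div, ← hs, div_self hpos.ne']
      have hlt := hcon E c' hE hnorm1
      have hsum : ∑ i ∈ E, c' i • (T ^ i) x = ((s : ℂ))⁻¹ • ∑ i ∈ E, c i • (T ^ i) x := by
        rw [Finset.smul_sum]
        refine Finset.sum_congr rfl fun i _ => ?_
        simp only [hc', smul_smul, div_eq_inv_mul]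
      rw [hsum, norm_smul, norm_inv, Complex.norm_real, Real.norm_of_nonneg hs0] at hlt
      have hle := hlt.le
      calc ε * s ≤ (s⁻¹ * ‖∑ i ∈ E, c i • (T ^ i) x‖) * s :=
            mul_le_mul_of_nonneg_right hle hs0
        _ = ‖∑ i ∈ E, c i • (T ^ i) x‖ := by field_simp
  -- extract a sequence of good windows
  set f : ℕ → ℝ := fun n => ((I ∩ Set.Icc (-(n : ℤ)) (n : ℤ)).ncard : ℝ) / (2 * n + 1) with hf
  set δ := atTop.limsup f with hδ
  have hfreq : ∃ᶠ n in atTop, δ / 2 < f n := by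
    apply Filter.frequently_lt_of_lt_limsup _ (by linarith)
    exact Filter.isCoboundedUnder_le_of_le _ fun n =>
      div_nonneg (Nat.cast_nonneg _) (by positivity)
  obtain ⟨φ, hφmono, hφ⟩ := Filter.extraction_of_frequently_atTop hfreq
  -- the windowed finsets
  set F : ℕ → Finset ℤ := fun k =>
    (Finset.Icc (-(φ k : ℤ)) (φ k : ℤ)).filter (· ∈ I) with hF
  have hFcoe : ∀ k, (↑(F k) : Set ℤ) = I ∩ Set.Icc (-(φ k : ℤ)) (φ k : ℤ) := by
    intro k
    ext i
    simp only [hF, Finset.coe_filter, Finset.mem_Icc, Set.mem_setOf_eq,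
      Set.mem_inter_iff, Set.mem_Icc]
    tauto
  have hFcard : ∀ k, ((F k).card : ℝ) = ((I ∩ Set.Icc (-(φ k : ℤ)) (φ k : ℤ)).ncard : ℝ) := by
    intro k
    rw [← hFcoe k, Set.ncard_coe_finset]
  set N : ℕ → ℕ := fun k => 2 * φ k + 1 with hN
  set J : ℕ → Finset ℤ := fun k => (F k).image (fun j => j + (φ k : ℤ)) with hJ
  have hJcard : ∀ k, (J k).card = (F k).card := fun k =>
    Finset.card_image_of_injective _ (add_left_injective _)
  have hNtendsto : Tendsto N atTop atTop := by
    apply tendsto_atTop_mono (f := id) (fun k => ?_) tendsto_id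
    have hk : k ≤ φ k := hφmono.le_apply
    simp only [hN, id]
    omega
  apply h
  refine ⟨max 1 (‖x‖ / ε), δ / 2, N, J, le_max_left _ _, by linarith, hNtendsto, ?_⟩
  intro k
  refine ⟨?_, ?_, ε, max ε ‖x‖, hε, ?_, ?_⟩
  · -- J k ⊆ Ico 0 (N k)
    intro i hi
    simp only [hJ, Finset.mem_image, hF, Finset.mem_filter, Finset.mem_Icc] at hi
    obtain ⟨j, ⟨⟨hj1, hj2⟩, _⟩, rfl⟩ := hi
    simp only [Finset.mem_Ico, hN]
    push_cast
    constructor <;> linarith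
  · -- density
    have hk : δ / 2 < ((I ∩ Set.Icc (-(φ k : ℤ)) (φ k : ℤ)).ncard : ℝ) / (2 * (φ k : ℝ) + 1) :=
      hφ k
    have hpos2 : (0:ℝ) < 2 * (φ k : ℝ) + 1 := by positivity
    rw [lt_div_iff₀ hpos2] at hk
    have h1 : ((J k).card : ℝ) = ((I ∩ Set.Icc (-(φ k : ℤ)) (φ k : ℤ)).ncard : ℝ) := by
      rw [hJcard, hFcard]
    have h2 : ((N k : ℕ) : ℝ) = 2 * (φ k : ℝ) + 1 := by
      simp only [hN]; push_cast; ring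
    rw [h1, h2]
    linarith
  · -- b ≤ lam * a
    have heq : max 1 (‖x‖ / ε) * ε = max ε ‖x‖ := by
      rw [max_mul_of_nonneg _ _ hε.le, one_mul, div_mul_cancel₀ _ hε.ne']
    exact heq.ge
  · -- the two norm estimates
    intro c
    have hinj : ∀ a ∈ F k, ∀ b ∈ F k, a + (φ k : ℤ) = b + (φ k : ℤ) → a = b := by
      intro a _ b _ hab; exact add_left_injective _ hab
    have hsum1 : ∑ i ∈ J k, ‖c i‖ = ∑ j ∈ F k, ‖c (j + (φ k : ℤ))‖ :=
      Finset.sum_image hinj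
    have hsum2 : ‖∑ i ∈ J k, c i • (T ^ i) x‖
        = ‖∑ j ∈ F k, c (j + (φ k : ℤ)) • (T ^ j) x‖ := by
      rw [show (∑ i ∈ J k, c i • (T ^ i) x)
          = ∑ j ∈ F k, c (j + (φ k : ℤ)) • (T ^ (j + (φ k : ℤ))) x from
        Finset.sum_image hinj]
      have hterm : ∀ j ∈ F k, c (j + (φ k : ℤ)) • (T ^ (j + (φ k : ℤ))) x
          = (T ^ ((φ k : ℤ))) (c (j + (φ k : ℤ)) • (T ^ j) x) := by
        intro j _
        rw [map_smul]
        congr 1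
        rw [add_comm j ((φ k : ℤ)), zpow_add]
        rfl
      rw [Finset.sum_congr rfl hterm, ← map_sum]
      exact LinearIsometryEquiv.norm_map _ _
    have hFsub : (↑(F k) : Set ℤ) ⊆ I := by
      rw [hFcoe k]; exact Set.inter_subset_left
    constructor
    · rw [hsum1, hsum2]
      exact key (F k) (fun j => c (j + (φ k : ℤ))) hFsub
    · calc ‖∑ i ∈ J k, c i • (T ^ i) x‖ ≤ ∑ i ∈ J k, ‖c i • (T ^ i) x‖ :=
            norm_sum_le _ _
        _ = ∑ i ∈ J k, ‖c i‖ * ‖x‖ := by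
            refine Finset.sum_congr rfl fun i _ => ?_
            rw [norm_smul, LinearIsometryEquiv.norm_map]
        _ = ‖x‖ * ∑ i ∈ J k, ‖c i‖ := by rw [← Finset.sum_mul, mul_comm]
        _ ≤ max ε ‖x‖ * ∑ i ∈ J k, ‖c i‖ := by
            apply mul_le_mul_of_nonneg_right (le_max_right _ _)
            exact Finset.sum_nonneg fun i _ => norm_nonneg _
end
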